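/- arXiv:2107.09345 — 2 statements merged into one kernel-verified Lean document; each statement's English description precedes it below -/
import Mathlib

section
/- Let A be a commutative unital C*-algebra with a faithful state τ, let B be a semifinite von Neumann algebra with normal faithful semifinite trace Tr, and let F : A → B be a linear map satisfying τ(x*y) = Tr(F(x)*F(y)) for all x, y ∈ A (Parseval) and ‖F(x)‖ ≤ τ(|x|) for all x ∈ A (Riemann–Lebesgue). Then for every x ∈ A with x ≠ 0, denoting by [x] the support projection of x in the von Neumann completion of A and by [F(x)] the support projection of F(x) in B, one has 1 ≤ τ([x]) · Tr([F(x)]). -/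
/-!
With `|x| = √(x⋆x)`, the Riemann–Lebesgue bound, Cauchy–Schwarz for `τ` applied to
`τ |x| = τ (|x| p)`, Parseval, and the operator inequality `F(x)⋆F(x) = e F(x)⋆F(x) e ≤ ‖F x‖² e`
give `‖F x‖² ≤ τ(|x|)² ≤ τ(x⋆x) τ(p) = Tr(F(x)⋆F(x)) τ(p) ≤ ‖F x‖² Tr(e) τ(p)`,
and `‖F x‖ ≠ 0` by faithfulness of `τ` and Parseval.
-/

open scoped ComplexOrder

theorem CStarRing.mul_eq_self_of_star_mul_self_mul_eq {R : Type*} [NonUnitalNormedRing R]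
    [StarRing R] [CStarRing R] {y p : R} (hp : IsSelfAdjoint p)
    (h : star y * y * p = star y * y) : y * p = y := by
  have h' : p * (star y * y) = star y * y := by
    simpa [hp.star_eq, mul_assoc] using congrArg star h
  have : star (y - y * p) * (y - y * p) = 0 :=
    calc star (y - y * p) * (y - y * p)
        = star y * y - p * (star y * y) - (star y * y * p - p * (star y * y) * p) := by
          rw [star_sub, star_mul, hp.star_eq]; noncomm_ring
      _ = 0 := by simp [h', h]
  exact (sub_eq_zero.mp ((CStarRing.star_mul_self_eq_zero_iff _).mp this)).symm

namespace PositiveLinearMap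

section NonUnital

variable {A : Type*} [NonUnitalCStarAlgebra A] [PartialOrder A] [StarOrderedRing A]

theorem norm_apply_star_mul_sq_le (f : A →ₚ[ℂ] ℂ) (a b : A) :
    ‖f (star a * b)‖ ^ 2 ≤ (f (star a * a)).re * (f (star b * b)).re := by
  have hnorm (c : A) : ‖f.toPreGNS c‖ ^ 2 = (f (star c * c)).re :=
    Real.sq_sqrt (RCLike.nonneg_iff.mp (f.map_nonneg (star_mul_self_nonneg c))).1
  rw [← hnorm, ← hnorm, ← mul_pow]
  exact pow_le_pow_left₀ (norm_nonneg _) (norm_inner_le_norm (f.toPreGNS a) (f.toPreGNS b)) 2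

theorem re_apply_abs_sq_le (f : A →ₚ[ℂ] ℂ) {x p : A} (hp : IsIdempotentElem p)
    (hpsa : IsSelfAdjoint p) (hxp : x * p = x) :
    (f (CFC.abs x)).re ^ 2 ≤ (f (star x * x)).re * (f p).re := by
  have habs : CFC.abs x * p = CFC.abs x :=
    CStarRing.mul_eq_self_of_star_mul_self_mul_eq hpsa <| by
      rw [(CFC.abs_nonneg x).star_eq, CFC.abs_mul_abs, mul_assoc, hxp]
  calc (f (CFC.abs x)).re ^ 2 ≤ ‖f (CFC.abs x)‖ ^ 2 :=
        sq_le_sq' (neg_le_of_abs_le (Complex.abs_re_le_norm _)) (Complex.re_le_norm _)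
    _ = ‖f (star (CFC.abs x) * p)‖ ^ 2 := by rw [(CFC.abs_nonneg x).star_eq, habs]
    _ ≤ (f (star (CFC.abs x) * CFC.abs x)).re * (f (star p * p)).re :=
        f.norm_apply_star_mul_sq_le _ _
    _ = (f (star x * x)).re * (f p).re := by
        rw [(CFC.abs_nonneg x).star_eq, CFC.abs_mul_abs, hpsa.star_eq, hp.eq]

end NonUnital

theorem re_apply_star_mul_self_le {B : Type*} [CStarAlgebra B] [PartialOrder B]
    [StarOrderedRing B] (g : B →ₚ[ℂ] ℂ) {y e : B} (he : IsIdempotentElem e)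
    (hesa : IsSelfAdjoint e) (hye : y * e = y) :
    (g (star y * y)).re ≤ ‖y‖ ^ 2 * (g e).re := by
  have hle : star y * y ≤ ‖y‖ ^ 2 • e :=
    calc star y * y = star e * (star y * y) * e := by
          conv_lhs => rw [← hye]
          simp only [star_mul, mul_assoc]
      _ ≤ star e * algebraMap ℝ B ‖star y * y‖ * e :=
          star_left_conjugate_le_conjugate
            (IsSelfAdjoint.le_algebraMap_norm_self (.star_mul_self y)) e
      _ = ‖y‖ ^ 2 • e := by
          rw [Algebra.algebraMap_eq_smul_one, mul_smul_comm, mul_one, smul_mul_assoc,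
            hesa.star_eq, he.eq, CStarRing.norm_star_mul_self, sq]
  have := Complex.re_le_re (OrderHomClass.mono g hle)
  rwa [g.map_smul_of_tower, Complex.smul_re, smul_eq_mul] at this

end PositiveLinearMap

theorem stmt_7_general {A B : Type*} [CommCStarAlgebra A] [PartialOrder A] [StarOrderedRing A]
    [CStarAlgebra B] [PartialOrder B] [StarOrderedRing B]
    (τ : A →ₗ[ℂ] ℂ)
    (hτpos : ∀ a : A, 0 ≤ a → 0 ≤ (τ a).re ∧ (τ a).im = 0)
    (hτfaith : ∀ a : A, τ (star a * a) = 0 → a = 0)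
    (Tr : B →ₗ[ℂ] ℂ)
    (hTrpos : ∀ b : B, 0 ≤ b → 0 ≤ (Tr b).re ∧ (Tr b).im = 0)
    (F : A →ₗ[ℂ] B)
    (hParseval : ∀ x y : A, τ (star x * y) = Tr (star (F x) * F y))
    (hRL : ∀ x : A, ‖F x‖ ≤ (τ (CFC.sqrt (star x * x))).re)
    (x : A) (hx : x ≠ 0)
    (p : A) (hp : IsIdempotentElem p) (hpstar : star p = p) (hxp : x * p = x)
    (e : B) (he : IsIdempotentElem e) (hestar : star e = e) (hFe : F x * e = F x) :
    1 ≤ (τ p).re * (Tr e).re := by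
  let τ' : A →ₚ[ℂ] ℂ :=
    .mk₀ τ fun a ha ↦ Complex.nonneg_iff.mpr ⟨(hτpos a ha).1, (hτpos a ha).2.symm⟩
  let Tr' : B →ₚ[ℂ] ℂ :=
    .mk₀ Tr fun b hb ↦ Complex.nonneg_iff.mpr ⟨(hTrpos b hb).1, (hTrpos b hb).2.symm⟩
  have hFx : 0 < ‖F x‖ ^ 2 := by
    refine pow_pos (norm_pos_iff.mpr fun h ↦ hx (hτfaith x ?_)) 2
    rw [hParseval, h, star_zero, zero_mul, map_zero]
  have hτp : 0 ≤ (τ p).re :=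
    (hτpos p (by simpa [hpstar, hp.eq] using star_mul_self_nonneg p)).1
  have hCS : (τ (CFC.abs x)).re ^ 2 ≤ (τ (star x * x)).re * (τ p).re :=
    τ'.re_apply_abs_sq_le hp hpstar hxp
  have hTr : (τ (star x * x)).re ≤ ‖F x‖ ^ 2 * (Tr e).re :=
    hParseval x x ▸ Tr'.re_apply_star_mul_self_le he hestar hFe
  refine le_of_mul_le_mul_left ?_ hFx
  calc ‖F x‖ ^ 2 * 1 ≤ (τ (CFC.abs x)).re ^ 2 := by
        rw [mul_one]; exact pow_le_pow_left₀ (norm_nonneg _) (hRL x) 2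
    _ ≤ (τ (star x * x)).re * (τ p).re := hCS
    _ ≤ ‖F x‖ ^ 2 * (Tr e).re * (τ p).re := mul_le_mul_of_nonneg_right hTr hτp
    _ = ‖F x‖ ^ 2 * ((τ p).re * (Tr e).re) := by ring

/-- Donoho–Stark uncertainty principle for a Fourier-type transform `F` from a
commutative unital C*-algebra with faithful state `τ` to an algebra with positive
tracial functional `Tr`, satisfying Parseval's identity and the Riemann–Lebesgue
bound: `1 ≤ τ([x]) · Tr([F x])` for every `x ≠ 0`, where `[x]` and `[F x]` denote
the support projections. -/
theorem stmt_7 {A B : Type*} [CommCStarAlgebra A] [PartialOrder A] [StarOrderedRing A]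
    [CStarAlgebra B] [PartialOrder B] [StarOrderedRing B]
    (τ : A →ₗ[ℂ] ℂ) (hτ1 : τ 1 = 1)
    (hτpos : ∀ a : A, 0 ≤ a → 0 ≤ (τ a).re ∧ (τ a).im = 0)
    (hτfaith : ∀ a : A, τ (star a * a) = 0 → a = 0)
    (Tr : B →ₗ[ℂ] ℂ)
    (hTrpos : ∀ b : B, 0 ≤ b → 0 ≤ (Tr b).re ∧ (Tr b).im = 0)
    (hTrtrace : ∀ b c : B, Tr (b * c) = Tr (c * b))
    (F : A →ₗ[ℂ] B)
    (hParseval : ∀ x y : A, τ (star x * y) = Tr (star (F x) * F y))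
    (hRL : ∀ x : A, ‖F x‖ ≤ (τ (CFC.sqrt (star x * x))).re)
    (x : A) (hx : x ≠ 0)
    (p : A) (hp : IsIdempotentElem p) (hpstar : star p = p) (hxp : x * p = x)
    (hpmin : ∀ q : A, IsIdempotentElem q → star q = q → x * q = x → p ≤ q)
    (e : B) (he : IsIdempotentElem e) (hestar : star e = e) (hFe : F x * e = F x)
    (hemin : ∀ f : B, IsIdempotentElem f → star f = f → F x * f = F x → e ≤ f) :
    1 ≤ (τ p).re * (Tr e).re :=
  stmt_7_general τ hτpos hτfaith Tr hTrpos F hParseval hRL x hx p hp hpstar hxp e he hestar hFe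
end

section
/- Let A be a commutative unital C*-algebra with faithful state τ and define for x, y ∈ A a bilinear convolution x ∗ y such that: (i) x ∗ y ≥ 0 whenever x, y ≥ 0, (ii) τ(x ∗ y) = τ(x) τ(y) whenever x, y ≥ 0. Then for all x, y ∈ A (using ‖z‖₁ := τ(|z|)) one has ‖x ∗ y‖₁ ≤ ‖x‖₁ ‖y‖₁, provided each element of A can be L∞-approximated by finite sums Σ_m ν^m x^m with |ν^m| = 1 scalars and x^m ≥ 0 with Σ_m x^m = |x|, and ∗ is continuous in each variable for the operator norm. -/
/-!
For positive `a, b` the convolution `a ∗ b` is positive, so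
`‖a ∗ b‖₁ = τ(a ∗ b) = τ(a) τ(b) = ‖a‖₁ ‖b‖₁`. If `x' = ∑ νₘ cₘ` and `y' = ∑ μⱼ dⱼ` with
unimodular `νₘ, μⱼ` and positive `cₘ, dⱼ` summing to `|x|` and `|y|`, bilinearity and the
triangle inequality for `‖·‖₁` (which comes from `|u + v| ≤ |u| + |v|`, checked on characters)
give `‖x' ∗ y'‖₁ ≤ ∑ τ(cₘ) τ(dⱼ) = ‖x‖₁ ‖y‖₁`. As `‖·‖₁ ≤ ‖·‖` makes `‖·‖₁` Lipschitz and `∗` is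
separately continuous, the bound passes to the closure of such `x'` and `y'`, which contains
`x` and `y`.
-/

open WeakDual

noncomputable def l1Norm {A : Type*} [NonUnitalCStarAlgebra A] [PartialOrder A]
    [StarOrderedRing A] (τ : A →ₗ[ℂ] ℂ) (z : A) : ℝ :=
  (τ (CFC.abs z)).re

section State

variable {A : Type*} [CStarAlgebra A] [PartialOrder A] [StarOrderedRing A] {τ : A →ₗ[ℂ] ℂ}

lemma re_map_mono (hτ : ∀ a : A, 0 ≤ a → 0 ≤ (τ a).re) {a b : A} (hab : a ≤ b) :
    (τ a).re ≤ (τ b).re := by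
  simpa using hτ (b - a) (sub_nonneg.mpr hab)

lemma l1Norm_zero : l1Norm τ 0 = 0 := by
  simp [l1Norm]

lemma l1Norm_smul (r : ℂ) (z : A) : l1Norm τ (r • z) = ‖r‖ * l1Norm τ z := by
  simp [l1Norm, CFC.abs_smul]

lemma l1Norm_of_nonneg {a : A} (ha : 0 ≤ a) : l1Norm τ a = (τ a).re := by
  rw [l1Norm, CFC.abs_of_nonneg a ha]

lemma l1Norm_le_norm (hτ1 : τ 1 = 1) (hτ : ∀ a : A, 0 ≤ a → 0 ≤ (τ a).re) (z : A) :
    l1Norm τ z ≤ ‖z‖ := by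
  have h := re_map_mono hτ (IsSelfAdjoint.le_algebraMap_norm_self (a := CFC.abs z) (by cfc_tac))
  rwa [CFC.norm_abs, Algebra.algebraMap_eq_smul_one, ← Complex.coe_smul, map_smul, hτ1,
    smul_eq_mul, mul_one, Complex.ofReal_re] at h

end State

section Commutative

variable {A : Type*} [CommCStarAlgebra A] [PartialOrder A] [StarOrderedRing A] {τ : A →ₗ[ℂ] ℂ}

open scoped ComplexOrder in
lemma WeakDual.CharacterSpace.apply_cfcAbs (φ : characterSpace ℂ A) (z : A) :
    φ (CFC.abs z) = ‖φ z‖ := by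
  have h_nonneg : 0 ≤ φ (CFC.abs z) := by
    simpa using OrderHomClass.mono φ (CFC.abs_nonneg z)
  have h_sq : ‖φ (CFC.abs z)‖ ^ 2 = ‖φ z‖ ^ 2 := by
    rw [← norm_pow, sq, ← map_mul, CFC.abs_mul_abs, map_mul, map_star, norm_mul, norm_star, sq]
  rw [Complex.eq_coe_norm_of_nonneg h_nonneg,
    (pow_left_inj₀ (norm_nonneg _) (norm_nonneg _) two_ne_zero).mp h_sq]

lemma nonneg_of_forall_character_re_nonneg {a : A} (ha : IsSelfAdjoint a)
    (h : ∀ φ : characterSpace ℂ A, 0 ≤ (φ a).re) : 0 ≤ a := by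
  rw [StarOrderedRing.nonneg_iff_spectrum_nonneg (R := ℝ) a ha]
  intro r hr
  obtain ⟨φ, hφ⟩ := CharacterSpace.mem_spectrum_iff_exists.mp (spectrum.algebraMap_mem ℂ hr)
  simpa [hφ] using h φ

lemma CFC.abs_add_le (u v : A) : CFC.abs (u + v) ≤ CFC.abs u + CFC.abs v := by
  rw [← sub_nonneg]
  refine nonneg_of_forall_character_re_nonneg (by cfc_tac) fun φ => ?_
  simp only [map_sub, map_add, CharacterSpace.apply_cfcAbs, Complex.sub_re, Complex.add_re,
    Complex.ofReal_re, sub_nonneg]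
  exact norm_add_le _ _

lemma l1Norm_add_le (hτ : ∀ a : A, 0 ≤ a → 0 ≤ (τ a).re) (u v : A) :
    l1Norm τ (u + v) ≤ l1Norm τ u + l1Norm τ v := by
  simpa [l1Norm] using re_map_mono hτ (CFC.abs_add_le u v)

lemma l1Norm_sum_le (hτ : ∀ a : A, 0 ≤ a → 0 ≤ (τ a).re) {ι : Type*} (s : Finset ι) (f : ι → A) :
    l1Norm τ (∑ i ∈ s, f i) ≤ ∑ i ∈ s, l1Norm τ (f i) :=
  Finset.le_sum_of_subadditive _ l1Norm_zero.le (l1Norm_add_le hτ) s f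

lemma lipschitzWith_l1Norm (hτ1 : τ 1 = 1) (hτ : ∀ a : A, 0 ≤ a → 0 ≤ (τ a).re) :
    LipschitzWith 1 (l1Norm τ) :=
  .of_le_add fun u v => by
    simpa [dist_eq_norm] using
      (l1Norm_add_le hτ v (u - v)).trans (add_le_add_right (l1Norm_le_norm hτ1 hτ _) _)

end Commutative

lemma le_of_mem_closure_of_separatelyContinuous {X Y : Type*} [TopologicalSpace X]
    [TopologicalSpace Y] {f : X → Y → ℝ} (hf₁ : ∀ y, Continuous (f · y))
    (hf₂ : ∀ x, Continuous (f x)) {s : Set X} {t : Set Y} {C : ℝ}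
    (h : ∀ x ∈ s, ∀ y ∈ t, f x y ≤ C) {x : X} {y : Y} (hx : x ∈ closure s)
    (hy : y ∈ closure t) : f x y ≤ C := by
  have h' : ∀ x' ∈ s, f x' y ≤ C := fun x' hx' =>
    (isClosed_le (hf₂ x') continuous_const).closure_subset_iff.mpr (h x' hx') hy
  exact (isClosed_le (hf₁ y) continuous_const).closure_subset_iff.mpr h' hx

-- Simple-function approximations `∑ νₘ cₘ` of the polar decomposition `x = u |x|`.
def polarSums {A : Type*} [NonUnitalCStarAlgebra A] [PartialOrder A] [StarOrderedRing A]
    (x : A) : Set A :=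
  {x' | ∃ (n : ℕ) (ν : Fin n → ℂ) (c : Fin n → A), (∀ m, ‖ν m‖ = 1) ∧ (∀ m, 0 ≤ c m) ∧
    ∑ m, c m = CFC.abs x ∧ x' = ∑ m, ν m • c m}

section Convolution

variable {A : Type*} [CommCStarAlgebra A] [PartialOrder A] [StarOrderedRing A] {τ : A →ₗ[ℂ] ℂ}

lemma l1Norm_eq_sum_of_sum_eq_abs {x : A} {n : ℕ} {c : Fin n → A}
    (hc : ∑ m, c m = CFC.abs x) : l1Norm τ x = ∑ m, (τ (c m)).re := by
  rw [l1Norm, ← hc, map_sum, Complex.re_sum]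

lemma l1Norm_apply_le_of_mem_polarSums (hτ : ∀ a : A, 0 ≤ a → 0 ≤ (τ a).re ∧ (τ a).im = 0)
    {B : A →ₗ[ℂ] A →ₗ[ℂ] A} (hBpos : ∀ a b, 0 ≤ a → 0 ≤ b → 0 ≤ B a b)
    (hBτ : ∀ a b, 0 ≤ a → 0 ≤ b → τ (B a b) = τ a * τ b)
    {x y x' y' : A} (hx' : x' ∈ polarSums x) (hy' : y' ∈ polarSums y) :
    l1Norm τ (B x' y') ≤ l1Norm τ x * l1Norm τ y := by
  obtain ⟨n, ν, c, hν, hc, hcx, rfl⟩ := hx'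
  obtain ⟨k, μ, d, hμ, hd, hdy, rfl⟩ := hy'
  have hτre := fun a ha => (hτ a ha).1
  have hexpand : B (∑ m, ν m • c m) (∑ j, μ j • d j) =
      ∑ m, ∑ j, (ν m * μ j) • B (c m) (d j) := by
    simp only [map_sum, map_smul, LinearMap.coe_sum, Finset.sum_apply, LinearMap.smul_apply,
      Finset.smul_sum, smul_smul, mul_comm]
    exact Finset.sum_comm
  calc l1Norm τ (B (∑ m, ν m • c m) (∑ j, μ j • d j))
      ≤ ∑ m, ∑ j, l1Norm τ ((ν m * μ j) • B (c m) (d j)) := by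
        rw [hexpand]
        exact (l1Norm_sum_le hτre _ _).trans
          (Finset.sum_le_sum fun m _ => l1Norm_sum_le hτre _ _)
    _ = ∑ m, ∑ j, (τ (c m)).re * (τ (d j)).re := by
        refine Finset.sum_congr rfl fun m _ => Finset.sum_congr rfl fun j _ => ?_
        rw [l1Norm_smul, norm_mul, hν, hμ, one_mul, l1Norm_of_nonneg (hBpos _ _ (hc m) (hd j)),
          hBτ _ _ (hc m) (hd j), Complex.mul_re, (hτ _ (hc m)).2, zero_mul, sub_zero, one_mul]
    _ = l1Norm τ x * l1Norm τ y := by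
        rw [l1Norm_eq_sum_of_sum_eq_abs hcx, l1Norm_eq_sum_of_sum_eq_abs hdy,
          Finset.sum_mul_sum]

end Convolution

theorem stmt_14_general {A : Type*} [CommCStarAlgebra A] [PartialOrder A] [StarOrderedRing A]
    (τ : A →ₗ[ℂ] ℂ) (hτ1 : τ 1 = 1)
    (hτpos : ∀ a : A, 0 ≤ a → 0 ≤ (τ a).re ∧ (τ a).im = 0)
    (conv : A →ₗ[ℂ] A →ₗ[ℂ] A)
    (hconvpos : ∀ x y : A, 0 ≤ x → 0 ≤ y → 0 ≤ conv x y)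
    (hconvτ : ∀ x y : A, 0 ≤ x → 0 ≤ y → τ (conv x y) = τ x * τ y)
    (hcont : ∀ y : A, Continuous (fun x : A => conv x y) ∧
      Continuous (fun x : A => conv y x))
    (happrox : ∀ x : A, ∀ ε : ℝ, 0 < ε → ∃ (n : ℕ) (ν : Fin n → ℂ) (c : Fin n → A),
      (∀ m, ‖ν m‖ = 1) ∧ (∀ m, 0 ≤ c m) ∧
      (∑ m, c m = CFC.sqrt (star x * x)) ∧
      ‖x - ∑ m, ν m • c m‖ < ε) :
    ∀ x y : A,
      (τ (CFC.sqrt (star (conv x y) * conv x y))).re ≤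
        (τ (CFC.sqrt (star x * x))).re * (τ (CFC.sqrt (star y * y))).re := by
  have hτre := fun a ha => (hτpos a ha).1
  have hl1 : Continuous (l1Norm τ) := (lipschitzWith_l1Norm hτ1 hτre).continuous
  have hdense (z : A) : z ∈ closure (polarSums z) :=
    Metric.mem_closure_iff.mpr fun ε hε => by
      obtain ⟨n, ν, c, hν, hc, hsum, hclose⟩ := happrox z ε hε
      exact ⟨_, ⟨n, ν, c, hν, hc, hsum, rfl⟩, by rwa [dist_eq_norm]⟩
  intro x y
  -- `l1Norm τ z` unfolds to `(τ (CFC.sqrt (star z * z))).re`, the goal's form.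
  exact le_of_mem_closure_of_separatelyContinuous (f := fun x y => l1Norm τ (conv x y))
    (fun y => hl1.comp (hcont y).1) (fun x => hl1.comp (hcont x).2)
    (fun _ hx' _ hy' => l1Norm_apply_le_of_mem_polarSums hτpos hconvpos hconvτ hx' hy')
    (hdense x) (hdense y)

/-- Young's inequality for `r = p = q = 1`: a bilinear convolution on a commutative
unital C*-algebra with faithful state `τ` which is positive and multiplicative for
`τ` on positive elements, continuous in each variable, satisfies
`‖x ∗ y‖₁ ≤ ‖x‖₁ ‖y‖₁`, provided elements admit polar-type approximations by
finite combinations of positives summing to the modulus. -/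
theorem stmt_14 {A : Type*} [CommCStarAlgebra A] [PartialOrder A] [StarOrderedRing A]
    (τ : A →ₗ[ℂ] ℂ) (hτ1 : τ 1 = 1)
    (hτpos : ∀ a : A, 0 ≤ a → 0 ≤ (τ a).re ∧ (τ a).im = 0)
    (hτfaith : ∀ a : A, τ (star a * a) = 0 → a = 0)
    (conv : A →ₗ[ℂ] A →ₗ[ℂ] A)
    (hconvpos : ∀ x y : A, 0 ≤ x → 0 ≤ y → 0 ≤ conv x y)
    (hconvτ : ∀ x y : A, 0 ≤ x → 0 ≤ y → τ (conv x y) = τ x * τ y)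
    (hcont : ∀ y : A, Continuous (fun x : A => conv x y) ∧
      Continuous (fun x : A => conv y x))
    (happrox : ∀ x : A, ∀ ε : ℝ, 0 < ε → ∃ (n : ℕ) (ν : Fin n → ℂ) (c : Fin n → A),
      (∀ m, ‖ν m‖ = 1) ∧ (∀ m, 0 ≤ c m) ∧
      (∑ m, c m = CFC.sqrt (star x * x)) ∧
      ‖x - ∑ m, ν m • c m‖ < ε) :
    ∀ x y : A,
      (τ (CFC.sqrt (star (conv x y) * conv x y))).re ≤
        (τ (CFC.sqrt (star x * x))).re * (τ (CFC.sqrt (star y * y))).re :=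
  stmt_14_general τ hτ1 hτpos conv hconvpos hconvτ hcont happrox
end
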